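/- arXiv:math/0101039 — 4 statements merged into one kernel-verified Lean document; each statement's English description precedes it below -/
import Mathlib

section
/- Let (H, R) be a quasitriangular bialgebra over a field k. Then H*_R is quantum commutative as a left H-module algebra, i.e. f·g = Σ (R²⇀g)·(R¹⇀f) for all f, g ∈ H*, if and only if R = 1⊗1. -/
open TensorProduct LinearMap

noncomputable section

section RegularActions

variable {k H : Type*} [Field k] [Ring H] [Algebra k H]

/-- Left regular action of `H` on its dual: `(h ⇀ p)(x) = p (x * h)`. -/
def lact (h : H) (p : Module.Dual k H) : Module.Dual k H :=
  p ∘ₗ LinearMap.mulRight k h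

/-- Right regular action of `H` on its dual: `(p ↼ h)(x) = p (h * x)`. -/
def ract (h : H) (p : Module.Dual k H) : Module.Dual k H :=
  p ∘ₗ LinearMap.mulLeft k h

end RegularActions

section Legs

variable (k H : Type*) [Field k] [Ring H] [Algebra k H]

/-- `R ⊗ 1` viewed in `H ⊗ (H ⊗ H)` (the element `R₁₂`). -/
def leg12 (R : H ⊗[k] H) : H ⊗[k] (H ⊗[k] H) :=
  TensorProduct.assoc k H H H (R ⊗ₜ[k] (1 : H))

/-- The element `R₂₃ = 1 ⊗ R` of `H ⊗ (H ⊗ H)`. -/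
def leg23 (R : H ⊗[k] H) : H ⊗[k] (H ⊗[k] H) := (1 : H) ⊗ₜ[k] R

/-- The element `R₁₃` of `H ⊗ (H ⊗ H)`. -/
def leg13 (R : H ⊗[k] H) : H ⊗[k] (H ⊗[k] H) :=
  lTensor H (TensorProduct.comm k H H).toLinearMap (leg12 k H R)

end Legs

section QuasiTriangular

variable (k H : Type*) [Field k] [Ring H] [Bialgebra k H]

/-- `R` is an R-matrix making the bialgebra `H` quasitriangular:
`R` is invertible, `(Δ ⊗ id)(R) = R₁₃ R₂₃`, `(id ⊗ Δ)(R) = R₁₃ R₁₂`, and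
`Δᶜᵒᵖ(h) R = R Δ(h)` for all `h`. -/
def IsRMatrix (R : H ⊗[k] H) : Prop :=
  IsUnit R
  ∧ TensorProduct.assoc k H H H
      (rTensor H (Coalgebra.comul (R := k) (A := H)) R) = leg13 k H R * leg23 k H R
  ∧ lTensor H (Coalgebra.comul (R := k) (A := H)) R = leg13 k H R * leg12 k H R
  ∧ ∀ h : H, (TensorProduct.comm k H H) (Coalgebra.comul h) * R = R * Coalgebra.comul h

variable {k H}

/-- The convolution product on `H*`: `(f g)(h) = Σ f(h₁) g(h₂)`. -/
def conv (f g : Module.Dual k H) : Module.Dual k H :=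
  LinearMap.mul' k k ∘ₗ TensorProduct.map f g ∘ₗ (Coalgebra.comul (R := k) (A := H))

/-- The multiplication of `H*_R`: `(f · g)(h) = Σ g(h₁ R²) f(h₂ R¹)`,
i.e. `f · g = Σ (R² ⇀ g)(R¹ ⇀ f)`. -/
def mulR (R : H ⊗[k] H) (f g : Module.Dual k H) : Module.Dual k H :=
  LinearMap.mul' k k ∘ₗ TensorProduct.map g f
    ∘ₗ LinearMap.mulRight k ((TensorProduct.comm k H H) R)
    ∘ₗ (Coalgebra.comul (R := k) (A := H))

/-- The map `Q : H* → H`, `Q(p) = Σ p(R² r¹) R¹ r²`, i.e. `Q(p) = (p ⊗ id)(R₂₁ R)`. -/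
def Qmap (R : H ⊗[k] H) : Module.Dual k H →ₗ[k] H :=
  (TensorProduct.lid k H).toLinearMap
    ∘ₗ rTensor H (contractLeft k H)
    ∘ₗ (TensorProduct.assoc k (Module.Dual k H) H H).symm.toLinearMap
    ∘ₗ (TensorProduct.mk k (Module.Dual k H) (H ⊗[k] H)).flip
        ((TensorProduct.comm k H H) R * R)

end QuasiTriangular

/-!
Evaluating at `h` and separating tensors by functionals `f ⊗ g`, quantum commutativity of `H*_R`
says exactly `Δᶜᵒᵖ(h) R = Δ(h) R₂₁ R` for all `h`: the left side comes from swapping the two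
factors of `f · g`, the right side from `R¹ ⇀ f ⊗ R² ⇀ g = (f ⊗ g)(- · R)`. At `h = 1` this reads
`R = R₂₁ R`, so `R₂₁ = 1` by invertibility of `R`, i.e. `R = 1`. Conversely, for `R = 1` the
condition is cocommutativity of `H`, which the R-matrix axiom `Δᶜᵒᵖ(h) R = R Δ(h)` then asserts.
-/

section TensorSeparation

variable {k M N : Type*} [Field k] [AddCommGroup M] [Module k M] [AddCommGroup N] [Module k N]

theorem TensorProduct.eq_of_forall_mul'_map_eq {x y : M ⊗[k] N}
    (h : ∀ (f : Module.Dual k M) (g : Module.Dual k N),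
      mul' k k (map f g x) = mul' k k (map f g y)) : x = y := by
  let b := Module.Basis.ofVectorSpace k M
  let c := Module.Basis.ofVectorSpace k N
  have repr_eq : ∀ (t : M ⊗[k] N) i j,
      (b.tensorProduct c).repr t (i, j) = mul' k k (map (b.coord i) (c.coord j) t) := by
    intro t i j
    induction t using TensorProduct.induction_on with
    | zero => simp
    | tmul u v => simp [mul_comm]
    | add u v hu hv => simp only [map_add, Finsupp.add_apply, hu, hv]
  apply (b.tensorProduct c).repr.injective
  ext ⟨i, j⟩
  rw [repr_eq, repr_eq, h]

end TensorSeparation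

section TensorSquare

variable {k H : Type*} [Field k] [Ring H] [Algebra k H]

theorem TensorProduct.comm_mul (x y : H ⊗[k] H) :
    TensorProduct.comm k H H (x * y) = TensorProduct.comm k H H x * TensorProduct.comm k H H y :=
  map_mul (Algebra.TensorProduct.comm k H H) x y

theorem TensorProduct.comm_one : TensorProduct.comm k H H (1 : H ⊗[k] H) = 1 :=
  map_one (Algebra.TensorProduct.comm k H H)

theorem map_lact_lact_apply (a b : H) (f g : Module.Dual k H) (x : H ⊗[k] H) :
    map (lact a f) (lact b g) x = map f g (x * (a ⊗ₜ[k] b)) := by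
  induction x using TensorProduct.induction_on with
  | zero => simp
  | tmul u v => simp [lact, Algebra.TensorProduct.tmul_mul_tmul]
  | add u v hu hv => simp only [map_add, add_mul, hu, hv]

end TensorSquare

section QuantumCommutativity

variable {k H : Type*} [Field k] [Ring H] [Bialgebra k H]

local notation "Δ" => Coalgebra.comul (R := k) (A := H)
local notation "τ" => TensorProduct.comm k H H

theorem mulR_apply (R : H ⊗[k] H) (f g : Module.Dual k H) (h : H) :
    mulR R f g h = mul' k k (map f g (τ (Δ h) * R)) := by
  have unfold : mulR R f g h = mul' k k (map g f (Δ h * τ R)) := rfl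
  rw [unfold, ← mul'_comm, ← map_comm, TensorProduct.comm_mul, TensorProduct.comm_comm]

theorem sum_mulR_lact_apply {R : H ⊗[k] H} {n : ℕ} {R₁ R₂ : Fin n → H}
    (hrep : R = ∑ i, R₁ i ⊗ₜ[k] R₂ i) (f g : Module.Dual k H) (h : H) :
    (∑ i, mulR R (lact (R₂ i) g) (lact (R₁ i) f)) h = mul' k k (map f g (Δ h * τ R * R)) := by
  have summand : ∀ i, mulR R (lact (R₂ i) g) (lact (R₁ i) f) h
      = mul' k k (map f g (Δ h * τ R * (R₁ i ⊗ₜ[k] R₂ i))) := fun i =>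
    congrArg (mul' k k) (map_lact_lact_apply _ _ _ _ _)
  rw [LinearMap.sum_apply, Finset.sum_congr rfl fun i _ => summand i, ← map_sum, ← map_sum,
    ← Finset.mul_sum, ← hrep]

theorem quantumCommutative_iff (R : H ⊗[k] H) :
    (∀ (f g : Module.Dual k H) (n : ℕ) (R₁ R₂ : Fin n → H),
        R = ∑ i, R₁ i ⊗ₜ[k] R₂ i →
        mulR R f g = ∑ i, mulR R (lact (R₂ i) g) (lact (R₁ i) f))
      ↔ ∀ h : H, τ (Δ h) * R = Δ h * τ R * R := by
  constructor
  · intro hqc h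
    obtain ⟨n, R₁, R₂, hrep⟩ := TensorProduct.exists_sum_tmul_eq R
    refine TensorProduct.eq_of_forall_mul'_map_eq fun f g => ?_
    rw [← mulR_apply, ← sum_mulR_lact_apply hrep, hqc f g n R₁ R₂ hrep]
  · intro hR f g n R₁ R₂ hrep
    ext h
    rw [mulR_apply, sum_mulR_lact_apply hrep, hR]

end QuantumCommutativity

/-- Let `(H, R)` be a quasitriangular bialgebra over a field `k`.
Then `H*_R` is quantum commutative as a left `H`-module algebra, i.e.
`f·g = Σ (R² ⇀ g) · (R¹ ⇀ f)` for all `f, g ∈ H*` (the Sweedler sum running over any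
finite representation of `R`), if and only if `R = 1 ⊗ 1`. -/
theorem quantum_commutative_iff_R_trivial
    {k H : Type*} [Field k] [Ring H] [Bialgebra k H]
    (R : H ⊗[k] H) (hR : IsRMatrix k H R) :
    (∀ (f g : Module.Dual k H) (n : ℕ) (R₁ R₂ : Fin n → H),
        R = ∑ i, R₁ i ⊗ₜ[k] R₂ i →
        mulR R f g = ∑ i, mulR R (lact (R₂ i) g) (lact (R₁ i) f))
      ↔ R = 1 := by
  rw [quantumCommutative_iff]
  constructor
  · intro hqc
    have hflip : TensorProduct.comm k H H R * R = 1 * R := by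
      simpa [TensorProduct.comm_one] using (hqc 1).symm
    have hflip_one : TensorProduct.comm k H H R = 1 := hR.1.mul_right_cancel hflip
    rw [← TensorProduct.comm_comm k H H R, hflip_one, TensorProduct.comm_one]
  · rintro rfl h
    have hcocomm : TensorProduct.comm k H H (Coalgebra.comul h) = Coalgebra.comul h := by
      simpa using hR.2.2.2 h
    rw [hcocomm, TensorProduct.comm_one, mul_one, mul_one]
end
end

section
/- Let (H, R) be a quasitriangular Hopf algebra over a field k and define Q : H* → H by Q(p) = Σ p(R²r¹) R¹r², where R = Σ R¹⊗R² = Σ r¹⊗r². Then for all f, g ∈ H*, Q(f·g) = Σ Q(R¹⇀f) Q(g↼R²), where · is the product of H*_R. -/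
open TensorProduct LinearMap

noncomputable section

/-!
With `Q(p) = (p ⊗ id)(R₂₁R)`, both sides of the identity are images of elements of
`H ⊗ H ⊗ H` under `x ⊗ y ⊗ z ↦ g(x) f(y) z`: the left side of
`(Δ ⊗ id)(R₂₁R) R₂₁ = R₃₂R₃₁R₁₃R₂₃R₂₁`, the right side of `R₃₂R₂₃R₂₁R₃₁R₁₃`.
These agree by two instances of the quantum Yang–Baxter equation `R₁₂R₁₃R₂₃ = R₂₃R₁₃R₁₂`
with permuted legs, which in turn follows from `(Δ ⊗ id)(R) = R₁₃R₂₃` and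
`Δᶜᵒᵖ(h) R = R Δ(h)`.
-/

section Legs

variable {k H : Type*} [Field k] [Ring H] [Algebra k H]

lemma leg12_tmul (a b : H) : leg12 k H (a ⊗ₜ[k] b) = a ⊗ₜ (b ⊗ₜ 1) := rfl

lemma leg13_tmul (a b : H) : leg13 k H (a ⊗ₜ[k] b) = a ⊗ₜ (1 ⊗ₜ b) := rfl

lemma leg23_mul (x y : H ⊗[k] H) : leg23 k H (x * y) = leg23 k H x * leg23 k H y :=
  map_mul Algebra.TensorProduct.includeRight x y

lemma leftComm_leg12 (x : H ⊗[k] H) :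
    Algebra.TensorProduct.leftComm k H H H (leg12 k H x)
      = leg12 k H (TensorProduct.comm k H H x) := by
  induction x using TensorProduct.induction_on with
  | zero => simp [leg12]
  | tmul a b => rfl
  | add x y hx hy => simp_all [leg12, add_tmul]

lemma leftComm_leg13 (x : H ⊗[k] H) :
    Algebra.TensorProduct.leftComm k H H H (leg13 k H x) = leg23 k H x := by
  induction x using TensorProduct.induction_on with
  | zero => simp [leg13, leg12, leg23]
  | tmul a b => rfl
  | add x y hx hy => simp_all [leg13, leg12, leg23, add_tmul, tmul_add]

lemma leftComm_leg23 (x : H ⊗[k] H) :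
    Algebra.TensorProduct.leftComm k H H H (leg23 k H x) = leg13 k H x := by
  induction x using TensorProduct.induction_on with
  | zero => simp [leg13, leg12, leg23]
  | tmul a b => rfl
  | add x y hx hy => simp_all [leg13, leg12, leg23, add_tmul, tmul_add]

lemma leg13_mul (x y : H ⊗[k] H) : leg13 k H (x * y) = leg13 k H x * leg13 k H y := by
  simp only [← leftComm_leg23, leg23_mul, map_mul]

variable (k H) in
def tensorCycle : H ⊗[k] (H ⊗[k] H) ≃ₐ[k] H ⊗[k] (H ⊗[k] H) :=
  (Algebra.TensorProduct.comm k H (H ⊗[k] H)).trans (Algebra.TensorProduct.assoc k k k H H H)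

lemma tensorCycle_leg12 (x : H ⊗[k] H) :
    tensorCycle k H (leg12 k H x) = leg13 k H (TensorProduct.comm k H H x) := by
  induction x using TensorProduct.induction_on with
  | zero => simp [leg13, leg12]
  | tmul a b => rfl
  | add x y hx hy => simp_all [leg13, leg12, add_tmul]

lemma tensorCycle_leg13 (x : H ⊗[k] H) :
    tensorCycle k H (leg13 k H x) = leg23 k H (TensorProduct.comm k H H x) := by
  induction x using TensorProduct.induction_on with
  | zero => simp [leg13, leg12, leg23]
  | tmul a b => rfl
  | add x y hx hy => simp_all [leg13, leg12, leg23, add_tmul, tmul_add]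

lemma tensorCycle_leg23 (x : H ⊗[k] H) :
    tensorCycle k H (leg23 k H x) = leg12 k H x := by
  induction x using TensorProduct.induction_on with
  | zero => simp [leg12, leg23]
  | tmul a b => rfl
  | add x y hx hy => simp_all [leg12, leg23, add_tmul, tmul_add]

end Legs

section ComulLeft

variable {k H : Type*} [Field k] [Ring H] [Bialgebra k H]

variable (k H) in
def comulLeft : H ⊗[k] H →ₐ[k] H ⊗[k] (H ⊗[k] H) :=
  (Algebra.TensorProduct.assoc k k k H H H).toAlgHom.comp
    (Algebra.TensorProduct.map (Bialgebra.comulAlgHom k H) (AlgHom.id k H))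

lemma comulLeft_tmul (a b : H) :
    comulLeft k H (a ⊗ₜ b) = TensorProduct.assoc k H H H (Coalgebra.comul a ⊗ₜ b) := rfl

lemma comulLeft_apply (x : H ⊗[k] H) :
    comulLeft k H x = TensorProduct.assoc k H H H (rTensor H Coalgebra.comul x) := by
  induction x using TensorProduct.induction_on with
  | zero => simp
  | tmul a b => rfl
  | add x y hx hy => simp_all

lemma comulLeft_comm (x : H ⊗[k] H) :
    comulLeft k H (TensorProduct.comm k H H x) = tensorCycle k H (lTensor H Coalgebra.comul x) := by
  induction x using TensorProduct.induction_on with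
  | zero => simp
  | tmul a b => rfl
  | add x y hx hy => simp_all

lemma assoc_tmul_mul_assoc_tmul (x y : H ⊗[k] H) (b c : H) :
    TensorProduct.assoc k H H H (x ⊗ₜ b) * TensorProduct.assoc k H H H (y ⊗ₜ c)
      = TensorProduct.assoc k H H H ((x * y) ⊗ₜ (b * c)) := by
  rw [← Algebra.TensorProduct.tmul_mul_tmul]
  exact (map_mul (Algebra.TensorProduct.assoc k k k H H H) (x ⊗ₜ b) (y ⊗ₜ c)).symm

lemma comulLeft_tmul_mul_leg12 (a b : H) (w : H ⊗[k] H) :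
    comulLeft k H (a ⊗ₜ b) * leg12 k H w
      = TensorProduct.assoc k H H H ((Coalgebra.comul a * w) ⊗ₜ b) := by
  rw [comulLeft_tmul, leg12, assoc_tmul_mul_assoc_tmul, mul_one]

lemma leg12_mul_comulLeft_tmul (w : H ⊗[k] H) (a b : H) :
    leg12 k H w * comulLeft k H (a ⊗ₜ b)
      = TensorProduct.assoc k H H H ((w * Coalgebra.comul a) ⊗ₜ b) := by
  rw [comulLeft_tmul, leg12, assoc_tmul_mul_assoc_tmul, one_mul]

lemma leftComm_assoc_tmul (x : H ⊗[k] H) (b : H) :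
    Algebra.TensorProduct.leftComm k H H H (TensorProduct.assoc k H H H (x ⊗ₜ b))
      = TensorProduct.assoc k H H H (TensorProduct.comm k H H x ⊗ₜ b) := by
  induction x using TensorProduct.induction_on with
  | zero => simp
  | tmul a b => rfl
  | add x y hx hy => simp_all [add_tmul]

end ComulLeft

namespace IsRMatrix

variable {k H : Type*} [Field k] [Ring H] [Bialgebra k H] {R : H ⊗[k] H}

lemma comulLeft_eq (hR : IsRMatrix k H R) : comulLeft k H R = leg13 k H R * leg23 k H R := by
  rw [comulLeft_apply, hR.2.1]

lemma comulLeft_comm_eq (hR : IsRMatrix k H R) :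
    comulLeft k H (TensorProduct.comm k H H R)
      = leg23 k H (TensorProduct.comm k H H R) * leg13 k H (TensorProduct.comm k H H R) := by
  rw [comulLeft_comm, hR.2.2.1, map_mul, tensorCycle_leg13, tensorCycle_leg12]

lemma leg12_mul_comulLeft (hR : IsRMatrix k H R) (x : H ⊗[k] H) :
    leg12 k H R * comulLeft k H x
      = Algebra.TensorProduct.leftComm k H H H (comulLeft k H x) * leg12 k H R := by
  induction x using TensorProduct.induction_on with
  | zero => simp
  | tmul a b =>
    rw [leg12_mul_comulLeft_tmul, comulLeft_tmul, leftComm_assoc_tmul, leg12,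
      assoc_tmul_mul_assoc_tmul, mul_one, hR.2.2.2 a]
  | add x y hx hy => simp only [map_add, mul_add, add_mul, hx, hy]

theorem yang_baxter (hR : IsRMatrix k H R) :
    leg12 k H R * leg13 k H R * leg23 k H R = leg23 k H R * leg13 k H R * leg12 k H R := by
  have h := hR.leg12_mul_comulLeft R
  rwa [hR.comulLeft_eq, map_mul, leftComm_leg13, leftComm_leg23, ← mul_assoc] at h

theorem yang_baxter_leftComm (hR : IsRMatrix k H R) :
    leg12 k H (TensorProduct.comm k H H R) * leg23 k H R * leg13 k H R
      = leg13 k H R * leg23 k H R * leg12 k H (TensorProduct.comm k H H R) := by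
  simpa only [map_mul, leftComm_leg12, leftComm_leg13, leftComm_leg23] using
    congrArg (Algebra.TensorProduct.leftComm k H H H) hR.yang_baxter

theorem yang_baxter_tensorCycle (hR : IsRMatrix k H R) :
    leg23 k H R * leg12 k H (TensorProduct.comm k H H R) * leg13 k H (TensorProduct.comm k H H R)
      = leg13 k H (TensorProduct.comm k H H R) * leg12 k H (TensorProduct.comm k H H R)
        * leg23 k H R := by
  simpa only [map_mul, tensorCycle_leg12, tensorCycle_leg13, tensorCycle_leg23,
    TensorProduct.comm_comm] using
    congrArg (tensorCycle k H) (congrArg (tensorCycle k H) hR.yang_baxter)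

theorem comulLeft_mul_leg12 (hR : IsRMatrix k H R) :
    comulLeft k H (TensorProduct.comm k H H R * R) * leg12 k H (TensorProduct.comm k H H R)
      = leg23 k H (TensorProduct.comm k H H R * R) * leg12 k H (TensorProduct.comm k H H R)
        * leg13 k H (TensorProduct.comm k H H R * R) := by
  rw [map_mul, hR.comulLeft_comm_eq, hR.comulLeft_eq, leg23_mul, leg13_mul]
  set a := leg23 k H (TensorProduct.comm k H H R)
  set b := leg13 k H (TensorProduct.comm k H H R)
  set c := leg13 k H R
  set d := leg23 k H R
  set e := leg12 k H (TensorProduct.comm k H H R)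
  -- in leg notation: `a = R₃₂`, `b = R₃₁`, `c = R₁₃`, `d = R₂₃`, `e = R₂₁`
  calc a * b * (c * d) * e = a * (b * (c * d * e)) := by simp only [mul_assoc]
    _ = a * (b * (e * d * c)) := by rw [hR.yang_baxter_leftComm]
    _ = a * (b * e * d) * c := by simp only [mul_assoc]
    _ = a * (d * e * b) * c := by rw [hR.yang_baxter_tensorCycle]
    _ = a * d * e * (b * c) := by simp only [mul_assoc]

end IsRMatrix

section Contraction

variable {k H : Type*} [Field k] [Ring H] [Algebra k H]

def contractLegs12 (g f : Module.Dual k H) : H ⊗[k] (H ⊗[k] H) →ₗ[k] H :=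
  (TensorProduct.lid k H).toLinearMap
    ∘ₗ TensorProduct.map g ((TensorProduct.lid k H).toLinearMap ∘ₗ rTensor H f)

@[simp]
lemma contractLegs12_tmul (g f : Module.Dual k H) (x y z : H) :
    contractLegs12 g f (x ⊗ₜ (y ⊗ₜ z)) = g x • f y • z := rfl

lemma contractLegs12_assoc_tmul (g f : Module.Dual k H) (w : H ⊗[k] H) (c : H) :
    contractLegs12 g f (TensorProduct.assoc k H H H (w ⊗ₜ c))
      = LinearMap.mul' k k (TensorProduct.map g f w) • c := by
  induction w using TensorProduct.induction_on with
  | zero => simp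
  | tmul a b => simp [smul_smul]
  | add x y hx hy => simp_all [add_tmul, add_smul]

end Contraction

section Qmap

variable {k H : Type*} [Field k] [Ring H] [Bialgebra k H]

lemma Qmap_apply (R : H ⊗[k] H) (p : Module.Dual k H) :
    Qmap R p = TensorProduct.lid k H (rTensor H p (TensorProduct.comm k H H R * R)) := by
  suffices ∀ z : H ⊗[k] H, TensorProduct.lid k H (rTensor H (contractLeft k H)
      ((TensorProduct.assoc k (Module.Dual k H) H H).symm (p ⊗ₜ z)))
        = TensorProduct.lid k H (rTensor H p z) from this _
  intro z
  induction z using TensorProduct.induction_on with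
  | zero => simp
  | tmul x y => simp
  | add x y hx hy => simp_all [tmul_add]

lemma Qmap_mulR_eq_contractLegs12 (R : H ⊗[k] H) (f g : Module.Dual k H) :
    Qmap R (mulR R f g) = contractLegs12 g f
      (comulLeft k H (TensorProduct.comm k H H R * R)
        * leg12 k H (TensorProduct.comm k H H R)) := by
  rw [Qmap_apply]
  generalize TensorProduct.comm k H H R * R = z
  induction z using TensorProduct.induction_on with
  | zero => simp
  | tmul u v => simp [comulLeft_tmul_mul_leg12, contractLegs12_assoc_tmul, mulR]
  | add x y hx hy => simp_all [add_mul]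

lemma Qmap_lact_mul_Qmap_ract_eq_contractLegs12 (R : H ⊗[k] H) (f g : Module.Dual k H)
    (h h' : H) :
    Qmap R (lact h f) * Qmap R (ract h' g) = contractLegs12 g f
      (leg23 k H (TensorProduct.comm k H H R * R) * leg12 k H (h' ⊗ₜ h)
        * leg13 k H (TensorProduct.comm k H H R * R)) := by
  rw [Qmap_apply, Qmap_apply]
  suffices ∀ z₁ z₂ : H ⊗[k] H,
      TensorProduct.lid k H (rTensor H (lact h f) z₁)
          * TensorProduct.lid k H (rTensor H (ract h' g) z₂)
        = contractLegs12 g f (leg23 k H z₁ * leg12 k H (h' ⊗ₜ h) * leg13 k H z₂) from this _ _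
  intro z₁ z₂
  induction z₁ using TensorProduct.induction_on with
  | zero => simp [leg23]
  | add x y hx hy => simp_all [leg23, tmul_add, add_mul]
  | tmul a b =>
    induction z₂ using TensorProduct.induction_on with
    | zero => simp [leg13, leg12]
    | add x y hx hy => simp_all [leg13, leg12, add_tmul, mul_add]
    | tmul c d =>
      simp [leg23, leg12_tmul, leg13_tmul, lact, ract, smul_smul, mul_comm]

end Qmap

/-- Let `(H, R)` be a quasitriangular Hopf algebra over a field `k` and
define `Q : H* → H` by `Q(p) = Σ p(R² r¹) R¹ r²` (where `R = Σ R¹⊗R² = Σ r¹⊗r²`).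
Then for all `f, g ∈ H*`, `Q(f·g) = Σ Q(R¹ ⇀ f) Q(g ↼ R²)`, where `·` is the product of
`H*_R` and the Sweedler sum runs over any finite representation of `R`. -/
theorem Qmap_mulR
    {k H : Type*} [Field k] [Ring H] [HopfAlgebra k H]
    (R : H ⊗[k] H) (hR : IsRMatrix k H R) :
    ∀ (f g : Module.Dual k H) (n : ℕ) (R₁ R₂ : Fin n → H),
      R = ∑ i, R₁ i ⊗ₜ[k] R₂ i →
      Qmap R (mulR R f g) = ∑ i, Qmap R (lact (R₁ i) f) * Qmap R (ract (R₂ i) g) := by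
  intro f g n R₁ R₂ hrep
  have hleg : leg12 k H (TensorProduct.comm k H H R) = ∑ i, leg12 k H (R₂ i ⊗ₜ R₁ i) := by
    simp [hrep, leg12, sum_tmul]
  simp_rw [Qmap_lact_mul_Qmap_ract_eq_contractLegs12, ← map_sum, ← Finset.sum_mul,
    ← Finset.mul_sum, ← hleg, Qmap_mulR_eq_contractLegs12, hR.comulLeft_mul_leg12]
end
end

section
/- Let (H, R) and (H', R') be finite-dimensional quasitriangular Hopf algebras over a field k and F : H → H' a Hopf algebra map with (F⊗F)(R) = R'. Then: (a) the transpose F* : H'* → H* is an algebra map from H'*_{R'} to H*_R; (b) if H and H' are factorizable and F is injective, then (F*⊗F*)((Q'⁻¹⊗Q'⁻¹)(R'₂₁)) = (Q⁻¹⊗Q⁻¹)(R₂₁), where Q, Q' are the factorizability maps of H, H'. -/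
open TensorProduct LinearMap

noncomputable section

section Pentagon

variable {k D : Type*} [Field k] [AddCommGroup D] [Module k D]

/-- Componentwise product on `D ⊗ D` induced by a bilinear product `m` on `D`. -/
def mulT2 (m : D →ₗ[k] D →ₗ[k] D) :
    (D ⊗[k] D) →ₗ[k] (D ⊗[k] D) →ₗ[k] (D ⊗[k] D) :=
  (TensorProduct.homTensorHomMap (RingHom.id k) D D D D) ∘ₗ (TensorProduct.map m m)

/-- Componentwise product on `D ⊗ (D ⊗ D)` induced by a bilinear product `m` on `D`. -/
def mulT3 (m : D →ₗ[k] D →ₗ[k] D) :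
    (D ⊗[k] (D ⊗[k] D)) →ₗ[k] (D ⊗[k] (D ⊗[k] D)) →ₗ[k] (D ⊗[k] (D ⊗[k] D)) :=
  (TensorProduct.homTensorHomMap (RingHom.id k) D (D ⊗[k] D) D (D ⊗[k] D))
    ∘ₗ (TensorProduct.map m (mulT2 m))

/-- `W₁₂ = W ⊗ e` in `D ⊗ (D ⊗ D)`, where `e` is the unit element. -/
def w12 (e : D) (W : D ⊗[k] D) : D ⊗[k] (D ⊗[k] D) :=
  TensorProduct.assoc k D D D (W ⊗ₜ[k] e)

/-- `W₂₃ = e ⊗ W` in `D ⊗ (D ⊗ D)`. -/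
def w23 (e : D) (W : D ⊗[k] D) : D ⊗[k] (D ⊗[k] D) := e ⊗ₜ[k] W

/-- `W₁₃` in `D ⊗ (D ⊗ D)`. -/
def w13 (e : D) (W : D ⊗[k] D) : D ⊗[k] (D ⊗[k] D) :=
  LinearMap.lTensor D (TensorProduct.comm k D D).toLinearMap (w12 e W)

/-- The pentagon equation `W₁₂ W₁₃ W₂₃ = W₂₃ W₁₂` for `W ∈ D ⊗ D`, with respect to the
(possibly non-unital non-associative) algebra structure on `D` given by the bilinear
product `m` with distinguished unit element `e`. -/
def IsPentagonSolution (m : D →ₗ[k] D →ₗ[k] D) (e : D) (W : D ⊗[k] D) : Prop :=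
  mulT3 m (mulT3 m (w12 e W) (w13 e W)) (w23 e W) = mulT3 m (w23 e W) (w12 e W)

end Pentagon

section MulRL

variable {k H : Type*} [Field k] [Ring H] [Bialgebra k H]

/-- The multiplication of `H*_R` bundled as a bilinear map. -/
def mulRL (R : H ⊗[k] H) :
    Module.Dual k H →ₗ[k] Module.Dual k H →ₗ[k] Module.Dual k H :=
  LinearMap.mk₂ k (mulR R)
    (fun f f' g => by
      unfold mulR
      rw [TensorProduct.map_add_right, LinearMap.add_comp, LinearMap.comp_add])
    (fun c f g => by
      unfold mulR
      rw [TensorProduct.map_smul_right, LinearMap.smul_comp, LinearMap.comp_smul])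
    (fun f g g' => by
      unfold mulR
      rw [TensorProduct.map_add_left, LinearMap.add_comp, LinearMap.comp_add])
    (fun c f g => by
      unfold mulR
      rw [TensorProduct.map_smul_left, LinearMap.smul_comp, LinearMap.comp_smul])

end MulRL


namespace TAMP

variable {k H H' : Type*} [Field k] [Ring H] [Bialgebra k H] [Ring H'] [Bialgebra k H']

theorem ft_mul (F : H →ₐc[k] H') (x y : H ⊗[k] H) :
    TensorProduct.map F.toLinearMap F.toLinearMap (x * y)
      = TensorProduct.map F.toLinearMap F.toLinearMap x *
        TensorProduct.map F.toLinearMap F.toLinearMap y := by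
  have h : TensorProduct.map F.toLinearMap F.toLinearMap
      = (Algebra.TensorProduct.map (F : H →ₐ[k] H') (F : H →ₐ[k] H')).toLinearMap := by
    ext; rfl
  rw [h]; simp only [AlgHom.toLinearMap_apply, map_mul]

theorem ft_comm (F : H →ₐc[k] H') (x : H ⊗[k] H) :
    (TensorProduct.comm k H' H') (TensorProduct.map F.toLinearMap F.toLinearMap x)
      = TensorProduct.map F.toLinearMap F.toLinearMap ((TensorProduct.comm k H H) x) := by
  induction x using TensorProduct.induction_on with
  | zero => simp
  | tmul a b => simp
  | add u v hu hv => simp only [map_add, hu, hv]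

theorem mulR_comp (F : H →ₐc[k] H') (R : H ⊗[k] H) (R' : H' ⊗[k] H')
    (hFR : TensorProduct.map F.toLinearMap F.toLinearMap R = R')
    (f g : Module.Dual k H') :
    (mulR R' f g) ∘ₗ F.toLinearMap
      = mulR R (f ∘ₗ F.toLinearMap) (g ∘ₗ F.toLinearMap) := by
  have hcm : ∀ h : H, Coalgebra.comul (R := k) (F.toLinearMap h)
      = TensorProduct.map F.toLinearMap F.toLinearMap (Coalgebra.comul h) := fun h =>
    (CoalgHomClass.map_comp_comul_apply F h).symm
  ext h
  simp only [mulR, comp_apply, mulRight_apply]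
  rw [hcm h, ← hFR, ft_comm, ← ft_mul, TensorProduct.map_comp, comp_apply]

theorem counit_comp (F : H →ₐc[k] H') :
    (Coalgebra.counit (R := k) (A := H') : Module.Dual k H') ∘ₗ F.toLinearMap
      = (Coalgebra.counit (R := k) (A := H) : Module.Dual k H) :=
  CoalgHomClass.counit_comp F

set_option synthInstance.maxHeartbeats 400000 in
theorem contract_aux (F : H →ₐc[k] H') (p : Module.Dual k H') (u : H ⊗[k] H) :
    F ((TensorProduct.lid k H) (rTensor H (contractLeft k H)
        ((TensorProduct.assoc k (Module.Dual k H) H H).symm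
          ((p ∘ₗ F.toLinearMap) ⊗ₜ[k] u))))
      = (TensorProduct.lid k H') (rTensor H' (contractLeft k H')
        ((TensorProduct.assoc k (Module.Dual k H') H' H').symm
          (p ⊗ₜ[k] TensorProduct.map F.toLinearMap F.toLinearMap u))) := by
  induction u using TensorProduct.induction_on with
  | zero => simp only [TensorProduct.tmul_zero, map_zero]
  | tmul a b =>
      simp only [TensorProduct.assoc_symm_tmul, rTensor_tmul, contractLeft_apply,
        TensorProduct.lid_tmul, TensorProduct.map_tmul, map_smul, comp_apply]
      rfl
  | add u v hu hv => simp only [TensorProduct.tmul_add, map_add, hu, hv]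

theorem qmap_eq (R : H ⊗[k] H) (p : Module.Dual k H) :
    Qmap R p = (TensorProduct.lid k H) (rTensor H (contractLeft k H)
      ((TensorProduct.assoc k (Module.Dual k H) H H).symm
        (p ⊗ₜ[k] ((TensorProduct.comm k H H) R * R)))) := rfl

theorem qmap_comp (F : H →ₐc[k] H') (R : H ⊗[k] H) (R' : H' ⊗[k] H')
    (hFR : TensorProduct.map F.toLinearMap F.toLinearMap R = R')
    (p : Module.Dual k H') :
    F (Qmap R (p ∘ₗ F.toLinearMap)) = Qmap R' p := by
  rw [qmap_eq, qmap_eq, contract_aux, ← hFR, ft_mul, ft_comm]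

theorem qi_comp (F : H →ₐc[k] H') (R : H ⊗[k] H) (R' : H' ⊗[k] H')
    (hFR : TensorProduct.map F.toLinearMap F.toLinearMap R = R')
    (Qi : H →ₗ[k] Module.Dual k H) (Qi' : H' →ₗ[k] Module.Dual k H')
    (hinj : Function.Injective F)
    (hQ1 : ∀ p, Qi (Qmap R p) = p) (hQ2' : ∀ h, Qmap R' (Qi' h) = h)
    (h : H) :
    F.toLinearMap.dualMap (Qi' (F h)) = Qi h := by
  have e1 : Qmap R (F.toLinearMap.dualMap (Qi' (F h))) = h := by
    apply hinj
    rw [dualMap_apply', qmap_comp F R R' hFR]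
    exact hQ2' (F h)
  calc F.toLinearMap.dualMap (Qi' (F h))
      = Qi (Qmap R (F.toLinearMap.dualMap (Qi' (F h)))) := (hQ1 _).symm
    _ = Qi h := by rw [e1]

theorem tensor_eq (F : H →ₐc[k] H') (R : H ⊗[k] H) (R' : H' ⊗[k] H')
    (hFR : TensorProduct.map F.toLinearMap F.toLinearMap R = R')
    (Qi : H →ₗ[k] Module.Dual k H) (Qi' : H' →ₗ[k] Module.Dual k H')
    (hinj : Function.Injective F)
    (hQ1 : ∀ p, Qi (Qmap R p) = p) (hQ2' : ∀ h, Qmap R' (Qi' h) = h) :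
    TensorProduct.map F.toLinearMap.dualMap F.toLinearMap.dualMap
        (TensorProduct.map Qi' Qi' ((TensorProduct.comm k H' H') R'))
      = TensorProduct.map Qi Qi ((TensorProduct.comm k H H) R) := by
  have hc : F.toLinearMap.dualMap ∘ₗ (Qi' ∘ₗ F.toLinearMap) = Qi :=
    LinearMap.ext fun h => qi_comp F R R' hFR Qi Qi' hinj hQ1 hQ2' h
  rw [← hc, ← hFR, ft_comm,
    TensorProduct.map_comp, TensorProduct.map_comp, comp_apply, comp_apply]

section Pentagon

variable {D D' : Type*} [AddCommGroup D] [Module k D] [AddCommGroup D'] [Module k D']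
variable (φ : D' →ₗ[k] D)

theorem map_comm_nat (x : D' ⊗[k] D') :
    TensorProduct.map φ φ ((TensorProduct.comm k D' D') x)
      = (TensorProduct.comm k D D) (TensorProduct.map φ φ x) := by
  induction x using TensorProduct.induction_on with
  | zero => simp
  | tmul a b => simp
  | add u v hu hv => simp only [map_add, hu, hv]

theorem mulT2_comp (m : D →ₗ[k] D →ₗ[k] D) (m' : D' →ₗ[k] D' →ₗ[k] D')
    (hm : ∀ a b, φ (m' a b) = m (φ a) (φ b))
    (x y : D' ⊗[k] D') :
    TensorProduct.map φ φ (mulT2 m' x y)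
      = mulT2 m (TensorProduct.map φ φ x) (TensorProduct.map φ φ y) := by
  induction x using TensorProduct.induction_on with
  | zero => simp only [map_zero, LinearMap.zero_apply]
  | add u v hu hv => simp only [map_add, LinearMap.add_apply, hu, hv]
  | tmul a b =>
    induction y using TensorProduct.induction_on with
    | zero => simp only [map_zero]
    | add u v hu hv => simp only [map_add, hu, hv]
    | tmul c d =>
      simp only [mulT2, comp_apply, TensorProduct.map_tmul,
        TensorProduct.homTensorHomMap_apply, hm]

theorem mulT3_comp (m : D →ₗ[k] D →ₗ[k] D) (m' : D' →ₗ[k] D' →ₗ[k] D')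
    (hm : ∀ a b, φ (m' a b) = m (φ a) (φ b))
    (x y : D' ⊗[k] (D' ⊗[k] D')) :
    TensorProduct.map φ (TensorProduct.map φ φ) (mulT3 m' x y)
      = mulT3 m (TensorProduct.map φ (TensorProduct.map φ φ) x)
          (TensorProduct.map φ (TensorProduct.map φ φ) y) := by
  induction x using TensorProduct.induction_on with
  | zero => simp only [map_zero, LinearMap.zero_apply]
  | add u v hu hv => simp only [map_add, LinearMap.add_apply, hu, hv]
  | tmul a X =>
    induction y using TensorProduct.induction_on with
    | zero => simp only [map_zero]
    | add u v hu hv => simp only [map_add, hu, hv]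
    | tmul c Y =>
      simp only [mulT3, comp_apply, TensorProduct.map_tmul,
        TensorProduct.homTensorHomMap_apply, hm, mulT2_comp φ m m' hm]

theorem w12_comp (e : D) (e' : D') (he : φ e' = e) (W : D' ⊗[k] D') :
    TensorProduct.map φ (TensorProduct.map φ φ) (w12 e' W)
      = w12 e (TensorProduct.map φ φ W) := by
  induction W using TensorProduct.induction_on with
  | zero => simp [w12]
  | add u v hu hv =>
      simp only [w12, TensorProduct.add_tmul, map_add] at hu hv ⊢
      rw [hu, hv]
  | tmul a b =>
      simp [w12, TensorProduct.assoc_tmul, he]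

theorem w23_comp (e : D) (e' : D') (he : φ e' = e) (W : D' ⊗[k] D') :
    TensorProduct.map φ (TensorProduct.map φ φ) (w23 e' W)
      = w23 e (TensorProduct.map φ φ W) := by
  simp [w23, he]

theorem w13_comp (e : D) (e' : D') (he : φ e' = e) (W : D' ⊗[k] D') :
    TensorProduct.map φ (TensorProduct.map φ φ) (w13 e' W)
      = w13 e (TensorProduct.map φ φ W) := by
  unfold w13
  rw [← w12_comp φ e e' he W]
  generalize w12 e' W = x
  induction x using TensorProduct.induction_on with
  | zero => simp
  | add u v hu hv => simp only [map_add, hu, hv]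
  | tmul a X =>
      simp only [lTensor_tmul, TensorProduct.map_tmul, LinearEquiv.coe_coe]
      rw [map_comm_nat]

theorem pentagon_transfer (m : D →ₗ[k] D →ₗ[k] D) (m' : D' →ₗ[k] D' →ₗ[k] D')
    (e : D) (e' : D')
    (hm : ∀ a b, φ (m' a b) = m (φ a) (φ b)) (he : φ e' = e)
    (W' : D' ⊗[k] D') (hp : IsPentagonSolution m' e' W') :
    IsPentagonSolution m e (TensorProduct.map φ φ W') := by
  unfold IsPentagonSolution at hp ⊢
  rw [← w12_comp φ e e' he, ← w13_comp φ e e' he, ← w23_comp φ e e' he,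
    ← mulT3_comp φ m m' hm, ← mulT3_comp φ m m' hm, ← mulT3_comp φ m m' hm, hp]

end Pentagon

end TAMP

/-- Let `(H, R)` and `(H', R')` be finite-dimensional quasitriangular
Hopf algebras over a field `k` and `F : H → H'` a Hopf algebra map with `(F⊗F)(R) = R'`.
Then: (a) the transpose `F* : H'* → H*` is an algebra map from `H'*_{R'}` to `H*_R`;
(b) if `H` and `H'` are factorizable (with inverses `Q⁻¹`, `Q'⁻¹` of the factorization
maps) and `F` is injective, then
`(F* ⊗ F*)((Q'⁻¹ ⊗ Q'⁻¹)(R'₂₁)) = (Q⁻¹ ⊗ Q⁻¹)(R₂₁)`; consequently, if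
`(Q'⁻¹ ⊗ Q'⁻¹)(R'₂₁)` is a solution to the pentagon equation (w.r.t. the algebra
structure of `H'*_{R'}`), then so is `(Q⁻¹ ⊗ Q⁻¹)(R₂₁)` (w.r.t. that of `H*_R`). -/
theorem transpose_algebra_map_and_pentagon
    {k H H' : Type*} [Field k] [Ring H] [HopfAlgebra k H] [Ring H'] [HopfAlgebra k H']
    [FiniteDimensional k H] [FiniteDimensional k H']
    (R : H ⊗[k] H) (R' : H' ⊗[k] H')
    (hR : IsRMatrix k H R) (hR' : IsRMatrix k H' R')
    (F : H →ₐc[k] H')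
    (hFR : TensorProduct.map F.toLinearMap F.toLinearMap R = R') :
    (∀ f g : Module.Dual k H',
        (mulR R' f g) ∘ₗ F.toLinearMap
          = mulR R (f ∘ₗ F.toLinearMap) (g ∘ₗ F.toLinearMap))
    ∧ ((Coalgebra.counit (R := k) (A := H') : Module.Dual k H') ∘ₗ F.toLinearMap
          = (Coalgebra.counit (R := k) (A := H) : Module.Dual k H))
    ∧ (∀ (Qi : H →ₗ[k] Module.Dual k H) (Qi' : H' →ₗ[k] Module.Dual k H'),
        Function.Injective F →
        (∀ p, Qi (Qmap R p) = p) → (∀ h, Qmap R (Qi h) = h) →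
        (∀ p, Qi' (Qmap R' p) = p) → (∀ h, Qmap R' (Qi' h) = h) →
        (TensorProduct.map F.toLinearMap.dualMap F.toLinearMap.dualMap
            (TensorProduct.map Qi' Qi' ((TensorProduct.comm k H' H') R'))
          = TensorProduct.map Qi Qi ((TensorProduct.comm k H H) R))
        ∧ (IsPentagonSolution (mulRL R')
              (Coalgebra.counit (R := k) (A := H'))
              (TensorProduct.map Qi' Qi' ((TensorProduct.comm k H' H') R')) →
            IsPentagonSolution (mulRL R)
              (Coalgebra.counit (R := k) (A := H))
              (TensorProduct.map Qi Qi ((TensorProduct.comm k H H) R)))) := by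
  refine ⟨TAMP.mulR_comp F R R' hFR, TAMP.counit_comp F, ?_⟩
  intro Qi Qi' hinj hQ1 hQ2 hQ1' hQ2'
  have hten := TAMP.tensor_eq F R R' hFR Qi Qi' hinj hQ1 hQ2'
  refine ⟨hten, ?_⟩
  intro hp
  have hm : ∀ a b : Module.Dual k H',
      F.toLinearMap.dualMap (mulRL R' a b)
        = mulRL R (F.toLinearMap.dualMap a) (F.toLinearMap.dualMap b) := by
    intro a b
    simp only [mulRL, LinearMap.mk₂_apply, dualMap_apply']
    exact TAMP.mulR_comp F R R' hFR a b
  have he : F.toLinearMap.dualMap (Coalgebra.counit (R := k) (A := H'))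
      = (Coalgebra.counit (R := k) (A := H)) := by
    rw [dualMap_apply']
    exact TAMP.counit_comp F
  rw [← hten]
  exact TAMP.pentagon_transfer F.toLinearMap.dualMap (mulRL R) (mulRL R')
    _ _ hm he _ hp
end
end

section
/- Let (H, R) be a quasitriangular Hopf algebra over a field k, V a quantum commutative left H-module algebra, and β : V → V#H, β(v) = Σ (R²·v)⊗R¹. Then for all v, w ∈ V and l ∈ H, with r = R a second copy of the R-matrix: β(v)(w⊗l) = Σ w(r²·v)⊗r¹l, and Σ β(l₂·v)(1⊗l₁) = (1⊗l)β(v) in V#H. -/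
open TensorProduct LinearMap

set_option synthInstance.maxHeartbeats 1000000
set_option maxHeartbeats 1000000

noncomputable section

section Smash

variable {k H V : Type*} [Field k] [Ring H] [HopfAlgebra k H] [Ring V] [Algebra k V]

/-- `V` is a left `H`-module algebra under the (`k`-bilinear) action `α`:
`1·v = v`, `(gh)·v = g·(h·v)`, `h·1 = ε(h)1` and `h·(vw) = Σ (h₁·v)(h₂·w)`. -/
def IsModuleAlgebra (α : H →ₗ[k] V →ₗ[k] V) : Prop :=
  (∀ v : V, α 1 v = v)
  ∧ (∀ (g h : H) (v : V), α (g * h) v = α g (α h v))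
  ∧ (∀ h : H, α h 1 = Coalgebra.counit (R := k) h • (1 : V))
  ∧ (∀ (h : H) (v w : V) (n : ℕ) (h₁ h₂ : Fin n → H),
      Coalgebra.comul (R := k) h = ∑ i, h₁ i ⊗ₜ[k] h₂ i →
      α h (v * w) = ∑ i, α (h₁ i) v * α (h₂ i) w)

/-- `V` is quantum commutative: `v w = Σ (R²·w)(R¹·v)`. -/
def IsQuantumCommutative (α : H →ₗ[k] V →ₗ[k] V) (R : H ⊗[k] H) : Prop :=
  ∀ (v w : V) (n : ℕ) (R₁ R₂ : Fin n → H),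
    R = ∑ i, R₁ i ⊗ₜ[k] R₂ i →
    v * w = ∑ i, α (R₂ i) w * α (R₁ i) v

/-- `m` is the multiplication of the smash product `V # H`:
`(v ⊗ h)(v' ⊗ h') = Σ v (h₁·v') ⊗ h₂ h'`. -/
def IsSmashMul (α : H →ₗ[k] V →ₗ[k] V)
    (m : V ⊗[k] H →ₗ[k] V ⊗[k] H →ₗ[k] V ⊗[k] H) : Prop :=
  ∀ (v v' : V) (h h' : H) (n : ℕ) (h₁ h₂ : Fin n → H),
    Coalgebra.comul (R := k) h = ∑ i, h₁ i ⊗ₜ[k] h₂ i →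
    m (v ⊗ₜ[k] h) (v' ⊗ₜ[k] h')
      = ∑ i, (v * α (h₁ i) v') ⊗ₜ[k] (h₂ i * h')

/-- The map `β : V → V # H`, `β(v) = Σ (R²·v) ⊗ R¹`. -/
def betaMap (α : H →ₗ[k] V →ₗ[k] V) (R : H ⊗[k] H) (v : V) : V ⊗[k] H :=
  (TensorProduct.comm k H V) (LinearMap.lTensor H (α.flip v) R)

end Smash

section AuxProof

variable {k H V : Type*} [Field k] [Ring H] [HopfAlgebra k H] [Ring V] [Algebra k V]

lemma exists_fin_tmul {R M N : Type*} [CommSemiring R] [AddCommMonoid M] [AddCommMonoid N]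
    [Module R M] [Module R N] (x : TensorProduct R M N) :
    ∃ (n : ℕ) (f : Fin n → M) (g : Fin n → N), x = ∑ i, f i ⊗ₜ[R] g i := by
  obtain ⟨S, hS⟩ := TensorProduct.exists_finset x
  refine ⟨S.card, fun i => (S.equivFin.symm i).1.1, fun i => (S.equivFin.symm i).1.2, ?_⟩
  rw [hS, ← Finset.sum_coe_sort S (fun p => p.1 ⊗ₜ[R] p.2)]
  exact Fintype.sum_equiv S.equivFin _ _ (fun p => by simp)

lemma betaMap_sum (α : H →ₗ[k] V →ₗ[k] V) (R : H ⊗[k] H) (v : V)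
    {n : ℕ} (r₁ r₂ : Fin n → H) (hdec : R = ∑ i, r₁ i ⊗ₜ[k] r₂ i) :
    betaMap α R v = ∑ i, α (r₂ i) v ⊗ₜ[k] r₁ i := by
  rw [betaMap, hdec]
  simp [map_sum]

lemma beta_part1 (R : H ⊗[k] H) (hR : IsRMatrix k H R)
    (α : H →ₗ[k] V →ₗ[k] V) (hα : IsModuleAlgebra α)
    (hqc : IsQuantumCommutative α R)
    (m : V ⊗[k] H →ₗ[k] V ⊗[k] H →ₗ[k] V ⊗[k] H) (hm : IsSmashMul α m)
    (v w : V) (l : H) (n : ℕ) (r₁ r₂ : Fin n → H)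
    (hdec : R = ∑ i, r₁ i ⊗ₜ[k] r₂ i) :
    m (betaMap α R v) (w ⊗ₜ[k] l) = ∑ i, (w * α (r₂ i) v) ⊗ₜ[k] (r₁ i * l) := by
  have hcom : ∀ i, ∃ (mn : ℕ) (a b : Fin mn → H),
      Coalgebra.comul (R := k) (r₁ i) = ∑ j, a j ⊗ₜ[k] b j := fun i =>
    exists_fin_tmul _
  choose nn a b hab using hcom
  set Φ : H ⊗[k] (H ⊗[k] H) →ₗ[k] V ⊗[k] H :=
    (lTensor V (LinearMap.mulRight k l)) ∘ₗ
    (rTensor H ((LinearMap.mul' k V) ∘ₗ (TensorProduct.comm k V V).toLinearMap ∘ₗ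
        TensorProduct.map (α.flip w) (α.flip v))) ∘ₗ
    (TensorProduct.assoc k H H H).symm.toLinearMap ∘ₗ
    (lTensor H (TensorProduct.comm k H H).toLinearMap) with hΦ
  have hΦt : ∀ x y z : H, Φ (x ⊗ₜ[k] (y ⊗ₜ[k] z)) = (α z v * α x w) ⊗ₜ[k] (y * l) := by
    intro x y z
    simp [hΦ]
  have hL : m (betaMap α R v) (w ⊗ₜ[k] l)
      = ∑ i, ∑ j, (α (r₂ i) v * α (a i j) w) ⊗ₜ[k] (b i j * l) := by
    rw [betaMap_sum α R v r₁ r₂ hdec, map_sum, LinearMap.sum_apply]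
    exact Finset.sum_congr rfl fun i _ => hm _ _ _ _ _ _ _ (hab i)
  have h1 : TensorProduct.assoc k H H H
      (rTensor H (Coalgebra.comul (R := k) (A := H)) R)
      = ∑ i, ∑ j, a i j ⊗ₜ[k] (b i j ⊗ₜ[k] r₂ i) := by
    rw [hdec, map_sum, map_sum]
    refine Finset.sum_congr rfl fun i _ => ?_
    rw [rTensor_tmul, hab i, TensorProduct.sum_tmul, map_sum]
    simp
  have hA : Φ (TensorProduct.assoc k H H H
      (rTensor H (Coalgebra.comul (R := k) (A := H)) R))
      = ∑ i, ∑ j, (α (r₂ i) v * α (a i j) w) ⊗ₜ[k] (b i j * l) := by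
    rw [h1]
    simp only [map_sum, hΦt]
  have h2 : leg13 k H R * leg23 k H R
      = ∑ p, ∑ q, r₁ p ⊗ₜ[k] (r₁ q ⊗ₜ[k] (r₂ p * r₂ q)) := by
    have e13 : leg13 k H R = ∑ p, r₁ p ⊗ₜ[k] ((1 : H) ⊗ₜ[k] r₂ p) := by
      rw [leg13, leg12, hdec, TensorProduct.sum_tmul, map_sum]
      simp
    have e23 : leg23 k H R = ∑ q, (1 : H) ⊗ₜ[k] (r₁ q ⊗ₜ[k] r₂ q) := by
      rw [leg23, hdec, TensorProduct.tmul_sum]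
    rw [e13, e23, Finset.sum_mul_sum]
    simp [Algebra.TensorProduct.tmul_mul_tmul]
  have hB : Φ (leg13 k H R * leg23 k H R)
      = ∑ q, (w * α (r₂ q) v) ⊗ₜ[k] (r₁ q * l) := by
    rw [h2]
    simp only [map_sum, hΦt]
    rw [Finset.sum_comm]
    refine Finset.sum_congr rfl fun q _ => ?_
    rw [← TensorProduct.sum_tmul]
    congr 1
    rw [hqc w (α (r₂ q) v) n r₁ r₂ hdec]
    exact (Finset.sum_congr rfl fun p _ => by rw [hα.2.1]).symm
  rw [hL, ← hA, congrArg Φ hR.2.1, hB]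

end AuxProof

/-- Let `(H, R)` be a quasitriangular Hopf algebra over a field `k`,
`V` a quantum commutative left `H`-module algebra, and `β(v) = Σ (R²·v) ⊗ R¹`.
Then for all `v, w ∈ V` and `l ∈ H`, with `r = R` a second copy of the R-matrix:
`β(v)(w ⊗ l) = Σ w (r²·v) ⊗ r¹ l`, and `Σ β(l₂·v)(1 ⊗ l₁) = (1 ⊗ l) β(v)` in `V # H`. -/
theorem beta_mul_formula_and_exchange
    {k H V : Type*} [Field k] [Ring H] [HopfAlgebra k H] [Ring V] [Algebra k V]
    (R : H ⊗[k] H) (hR : IsRMatrix k H R)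
    (α : H →ₗ[k] V →ₗ[k] V) (hα : IsModuleAlgebra α)
    (hqc : IsQuantumCommutative α R)
    (m : V ⊗[k] H →ₗ[k] V ⊗[k] H →ₗ[k] V ⊗[k] H) (hm : IsSmashMul α m) :
    (∀ (v w : V) (l : H) (n : ℕ) (r₁ r₂ : Fin n → H),
        R = ∑ i, r₁ i ⊗ₜ[k] r₂ i →
        m (betaMap α R v) (w ⊗ₜ[k] l) = ∑ i, (w * α (r₂ i) v) ⊗ₜ[k] (r₁ i * l))
    ∧ (∀ (v : V) (l : H) (n : ℕ) (l₁ l₂ : Fin n → H),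
        Coalgebra.comul (R := k) l = ∑ j, l₁ j ⊗ₜ[k] l₂ j →
        ∑ j, m (betaMap α R (α (l₂ j) v)) ((1 : V) ⊗ₜ[k] l₁ j)
          = m ((1 : V) ⊗ₜ[k] l) (betaMap α R v)) := by
  refine ⟨fun v w l n r₁ r₂ hdec => beta_part1 R hR α hα hqc m hm v w l n r₁ r₂ hdec, ?_⟩
  intro v l n l₁ l₂ hl
  obtain ⟨nr, r₁, r₂, hr⟩ := exists_fin_tmul R
  set Ψ : H ⊗[k] H →ₗ[k] V ⊗[k] H :=
    (TensorProduct.comm k H V).toLinearMap ∘ₗ lTensor H (α.flip v) with hΨ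
  have hΨt : ∀ x y : H, Ψ (x ⊗ₜ[k] y) = α y v ⊗ₜ[k] x := fun x y => by simp [hΨ]
  have hLHS : ∑ j, m (betaMap α R (α (l₂ j) v)) ((1 : V) ⊗ₜ[k] l₁ j)
      = Ψ (R * Coalgebra.comul (R := k) l) := by
    have hprod : R * Coalgebra.comul (R := k) l
        = ∑ i, ∑ j, (r₁ i * l₁ j) ⊗ₜ[k] (r₂ i * l₂ j) := by
      rw [hr, hl, Finset.sum_mul_sum]
      simp [Algebra.TensorProduct.tmul_mul_tmul]
    rw [hprod]
    simp only [map_sum, hΨt]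
    rw [Finset.sum_comm]
    refine Finset.sum_congr rfl fun j _ => ?_
    rw [beta_part1 R hR α hα hqc m hm (α (l₂ j) v) 1 (l₁ j) nr r₁ r₂ hr]
    refine Finset.sum_congr rfl fun i _ => ?_
    rw [one_mul, ← hα.2.1]
  have hRHS : m ((1 : V) ⊗ₜ[k] l) (betaMap α R v)
      = Ψ ((TensorProduct.comm k H H) (Coalgebra.comul (R := k) l) * R) := by
    have hcop : (TensorProduct.comm k H H) (Coalgebra.comul (R := k) (A := H) l)
        = ∑ j, l₂ j ⊗ₜ[k] l₁ j := by
      rw [hl, map_sum]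
      simp
    have hprod : (TensorProduct.comm k H H) (Coalgebra.comul (R := k) (A := H) l) * R
        = ∑ j, ∑ i, (l₂ j * r₁ i) ⊗ₜ[k] (l₁ j * r₂ i) := by
      rw [hcop, hr, Finset.sum_mul_sum]
      simp [Algebra.TensorProduct.tmul_mul_tmul]
    rw [hprod]
    simp only [map_sum, hΨt]
    rw [betaMap_sum α R v r₁ r₂ hr, map_sum, Finset.sum_comm]
    refine Finset.sum_congr rfl fun i _ => ?_
    rw [hm 1 (α (r₂ i) v) l (r₁ i) n l₁ l₂ hl]
    refine Finset.sum_congr rfl fun j _ => ?_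
    rw [one_mul, ← hα.2.1]
  rw [hLHS, hRHS, hR.2.2.2 l]
end
end
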